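/- Let B ⊆ A be an irreducible unital inclusion of C*-algebras (B' ∩ A = C·1) and E : A → B a conditional expectation. If u, v ∈ N_A(B) satisfy uBu* = B and vBv* = B, and Ad(v*u) restricted to B is an inner automorphism implemented by some unitary of B only when u, v are in the same U(B)-coset, then for u, v in distinct U(B)-cosets, E(v*u) = 0. -/
import Mathlib


/-- Let `B ⊆ A` be an irreducible unital inclusion of C*-algebras (`B' ∩ A = ℂ·1`) with a
conditional expectation `E : A → B`.  If for unitary normalizers `u, v` the automorphism
`Ad(v*u)` of `B` is implemented by a unitary of `B` only when `u, v` lie in the same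
`U(B)`-coset, then `E(v*u) = 0` whenever `u, v` lie in distinct `U(B)`-cosets. -/
theorem stmt_6 {A : Type*} [CStarAlgebra A] (B : StarSubalgebra ℂ A)
    (hirr : ∀ x : A, (∀ b ∈ B, x * b = b * x) → ∃ c : ℂ, x = c • (1 : A))
    (E : A →ₗ[ℂ] A)
    (hErange : ∀ x, E x ∈ B)
    (hEid : ∀ b ∈ B, E b = b)
    (hEbimod : ∀ b₁ ∈ B, ∀ b₂ ∈ B, ∀ x : A, E (b₁ * x * b₂) = b₁ * E x * b₂)
    (N : Set (unitary A))
    (hN : N = {u : unitary A |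
      (fun b => (u : A) * b * star (u : A)) '' (B : Set A) = (B : Set A)})
    (houter : ∀ u ∈ N, ∀ v ∈ N,
      (∃ w : A, w ∈ B ∧ w ∈ unitary A ∧
        ∀ b ∈ B, (star (v : A) * (u : A)) * b * star (star (v : A) * (u : A)) =
          w * b * star w) →
      star (v : A) * (u : A) ∈ B) :
    ∀ u ∈ N, ∀ v ∈ N, star (v : A) * (u : A) ∉ B → E (star (v : A) * (u : A)) = 0 := by
  intro u hu v hv hnot
  subst hN
  have hu' : (fun b => (u : A) * b * star (u : A)) '' (B : Set A) = (B : Set A) := hu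
  have hv' : (fun b => (v : A) * b * star (v : A)) '' (B : Set A) = (B : Set A) := hv
  obtain ⟨hu1, hu2⟩ := Unitary.mem_iff.mp u.prop
  obtain ⟨hv1, hv2⟩ := Unitary.mem_iff.mp v.prop
  set w : A := star (v : A) * (u : A) with hwdef
  have hsw : star w = star (u : A) * (v : A) := by rw [hwdef, star_mul, star_star]
  have hw1 : star w * w = 1 := by
    rw [hsw, hwdef]
    calc star (u : A) * (v : A) * (star (v : A) * (u : A))
        = star (u : A) * (((v : A) * star (v : A)) * (u : A)) := by simp only [mul_assoc]
      _ = 1 := by rw [hv2, one_mul, hu1]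
  have hw2 : w * star w = 1 := by
    rw [hsw, hwdef]
    calc star (v : A) * (u : A) * (star (u : A) * (v : A))
        = star (v : A) * (((u : A) * star (u : A)) * (v : A)) := by simp only [mul_assoc]
      _ = 1 := by rw [hu2, one_mul, hv1]
  -- conjugation maps B to B, forwards and backwards
  have huB : ∀ x ∈ B, (u : A) * x * star (u : A) ∈ B := by
    intro x hx
    have : (u : A) * x * star (u : A) ∈ (fun b => (u : A) * b * star (u : A)) '' (B : Set A) :=
      ⟨x, hx, rfl⟩
    rwa [hu'] at this
  have hvB : ∀ x ∈ B, (v : A) * x * star (v : A) ∈ B := by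
    intro x hx
    have : (v : A) * x * star (v : A) ∈ (fun b => (v : A) * b * star (v : A)) '' (B : Set A) :=
      ⟨x, hx, rfl⟩
    rwa [hv'] at this
  have huB' : ∀ x ∈ B, star (u : A) * x * (u : A) ∈ B := by
    intro x hx
    have hx' : x ∈ (fun b => (u : A) * b * star (u : A)) '' (B : Set A) := by
      rw [hu']; exact hx
    obtain ⟨y, hy, rfl⟩ := hx'
    have : star (u : A) * ((u : A) * y * star (u : A)) * (u : A) = y := by
      calc star (u : A) * ((u : A) * y * star (u : A)) * (u : A)
          = (star (u : A) * (u : A)) * y * (star (u : A) * (u : A)) := by simp only [mul_assoc]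
        _ = y := by rw [hu1, one_mul, mul_one]
    rw [this]; exact hy
  have hvB' : ∀ x ∈ B, star (v : A) * x * (v : A) ∈ B := by
    intro x hx
    have hx' : x ∈ (fun b => (v : A) * b * star (v : A)) '' (B : Set A) := by
      rw [hv']; exact hx
    obtain ⟨y, hy, rfl⟩ := hx'
    have : star (v : A) * ((v : A) * y * star (v : A)) * (v : A) = y := by
      calc star (v : A) * ((v : A) * y * star (v : A)) * (v : A)
          = (star (v : A) * (v : A)) * y * (star (v : A) * (v : A)) := by simp only [mul_assoc]
        _ = y := by rw [hv1, one_mul, mul_one]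
    rw [this]; exact hy
  have hwB : ∀ x ∈ B, w * x * star w ∈ B := by
    intro x hx
    have h1 : w * x * star w = star (v : A) * ((u : A) * x * star (u : A)) * (v : A) := by
      rw [hwdef, hsw]; simp only [mul_assoc]
    rw [h1]
    exact hvB' _ (huB x hx)
  have hwBsurj : ∀ y ∈ B, ∃ x ∈ B, w * x * star w = y := by
    intro y hy
    refine ⟨star w * y * w, ?_, ?_⟩
    · have h1 : star w * y * w = star (u : A) * ((v : A) * y * star (v : A)) * (u : A) := by
        rw [hwdef, hsw]; simp only [mul_assoc]
      rw [h1]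
      exact huB' _ (hvB y hy)
    · calc w * (star w * y * w) * star w
          = (w * star w) * y * (w * star w) := by simp only [mul_assoc]
        _ = y := by rw [hw2, one_mul, mul_one]
  set e : A := E w with hedef
  have heB : e ∈ B := hErange w
  -- the key intertwining identity
  have key : ∀ x ∈ B, e * x = (w * x * star w) * e := by
    intro x hx
    have h1 : E (w * x) = e * x := by
      have := hEbimod 1 (one_mem B) x hx w
      rw [one_mul, one_mul] at this
      exact this
    have h2 : E (w * x) = (w * x * star w) * e := by
      have hmem := hwB x hx
      have := hEbimod (w * x * star w) hmem 1 (one_mem B) w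
      rw [mul_one, mul_one] at this
      have heq : w * x * star w * w = w * x := by
        calc w * x * star w * w = w * x * (star w * w) := by simp only [mul_assoc]
          _ = w * x := by rw [hw1, mul_one]
      rw [heq, ← hedef] at this
      exact this
    rw [← h1, h2]
  have keystar : ∀ x ∈ B, star e * (w * x * star w) = x * star e := by
    intro x hx
    have h := key (star x) (star_mem hx)
    have h2 := congrArg star h
    simp only [star_mul, star_star] at h2
    rw [h2]
    simp only [mul_assoc]
  -- star e * e is central
  have hcomm1 : ∀ x ∈ B, (star e * e) * x = x * (star e * e) := by
    intro x hx
    calc (star e * e) * x = star e * (e * x) := by simp only [mul_assoc]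
      _ = star e * ((w * x * star w) * e) := by rw [key x hx]
      _ = (star e * (w * x * star w)) * e := by simp only [mul_assoc]
      _ = (x * star e) * e := by rw [keystar x hx]
      _ = x * (star e * e) := by simp only [mul_assoc]
  have hcomm2 : ∀ y ∈ B, (e * star e) * y = y * (e * star e) := by
    intro y hy
    obtain ⟨x, hx, rfl⟩ := hwBsurj y hy
    calc (e * star e) * (w * x * star w) = e * (star e * (w * x * star w)) := by simp only [mul_assoc]
      _ = e * (x * star e) := by rw [keystar x hx]
      _ = (e * x) * star e := by simp only [mul_assoc]
      _ = ((w * x * star w) * e) * star e := by rw [key x hx]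
      _ = (w * x * star w) * (e * star e) := by simp only [mul_assoc]
  obtain ⟨c, hc⟩ := hirr (star e * e) (fun x hx => hcomm1 x hx)
  obtain ⟨c', hc'⟩ := hirr (e * star e) (fun x hx => hcomm2 x hx)
  -- suppose e ≠ 0, derive contradiction
  by_contra he0
  haveI : Nontrivial A := ⟨⟨e, 0, he0⟩⟩
  have hinj : ∀ d : ℂ, d • (1 : A) = 0 → d = 0 := by
    intro d hd
    have := congrArg norm hd
    rw [norm_smul, norm_one, norm_zero, mul_one] at this
    exact norm_eq_zero.mp this
  -- c = c'
  have hcc' : c = c' := by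
    have h1 : e * (star e * e) = (e * star e) * e := by simp only [mul_assoc]
    rw [hc, hc'] at h1
    rw [mul_smul_comm, mul_one, smul_mul_assoc, one_mul] at h1
    by_contra hne
    have : (c - c') • e = 0 := by rw [sub_smul, h1, sub_self]
    rcases smul_eq_zero.mp this with h | h
    · exact hne (sub_eq_zero.mp h)
    · exact he0 h
  -- c is real
  have hcsa : (starRingEnd ℂ) c = c := by
    have h1 : star (star e * e) = star e * e := by simp [star_mul, mul_assoc]
    rw [hc, star_smul, star_one, Complex.star_def] at h1
    have h2 : ((starRingEnd ℂ) c - c) • (1 : A) = 0 := by rw [sub_smul, h1, sub_self]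
    exact sub_eq_zero.mp (hinj _ h2)
  set r : ℝ := c.re with hrdef
  have hcr : (r : ℂ) = c := Complex.conj_eq_iff_re.mp hcsa
  -- c ≠ 0
  have hcne : c ≠ 0 := by
    intro h
    rw [h, zero_smul] at hc
    have := CStarRing.norm_star_mul_self (x := e)
    rw [hc, norm_zero] at this
    exact he0 (norm_eq_zero.mp (mul_self_eq_zero.mp this.symm))
  -- r > 0 via spectrum
  have hralg : star e * e = algebraMap ℝ A r := by
    rw [hc, ← hcr, Algebra.algebraMap_eq_smul_one, Complex.coe_smul]
  have hrpos : 0 < r := by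
    have hmem : r ∈ spectrum ℝ (star e * e) := by
      rw [hralg]
      simp [spectrum.mem_iff]
    have h0 := spectrum_star_mul_self_nonneg r hmem
    have hrne : r ≠ 0 := by
      intro h
      apply hcne
      rw [← hcr, h, Complex.ofReal_zero]
    exact lt_of_le_of_ne h0 (Ne.symm hrne)
  -- build the unitary
  set s : ℝ := Real.sqrt r with hsdef
  have hs2 : (s : ℝ) * s = r := Real.mul_self_sqrt hrpos.le
  have hsne : (s : ℂ) ≠ 0 := by
    simp only [ne_eq, Complex.ofReal_eq_zero]
    positivity
  set z : ℂ := (s : ℂ)⁻¹ with hzdef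
  have hzz : z * z * (r : ℂ) = 1 := by
    rw [hzdef, ← hs2]
    push_cast
    field_simp
  set w₀ : A := z • e with hw₀def
  have hw₀B : w₀ ∈ B := SMulMemClass.smul_mem z heB
  have hzstar : star z = z := by
    rw [hzdef, Complex.star_def, ← Complex.ofReal_inv, Complex.conj_ofReal]
  have hstarw₀ : star w₀ = z • star e := by
    rw [hw₀def, star_smul, hzstar]
  have hw₀1 : star w₀ * w₀ = 1 := by
    rw [hstarw₀, hw₀def, smul_mul_smul_comm, hc, ← hcr, smul_smul, hzz, one_smul]
  have hw₀2 : w₀ * star w₀ = 1 := by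
    rw [hstarw₀, hw₀def, smul_mul_smul_comm, hc', ← hcc', ← hcr, smul_smul, hzz, one_smul]
  have hconj : ∀ x ∈ B, w * x * star w = w₀ * x * star w₀ := by
    intro x hx
    have h1 : w₀ * x * star w₀ = (z * z) • (e * x * star e) := by
      rw [hw₀def, hstarw₀, smul_mul_assoc, smul_mul_smul_comm]
    rw [h1]
    have h2 : e * x * star e = (r : ℂ) • (w * x * star w) := by
      rw [key x hx, mul_assoc, hc', ← hcc', ← hcr, mul_smul_comm, mul_one]
    rw [h2, smul_smul, hzz, one_smul]
  exact hnot (houter u hu v hv ⟨w₀, hw₀B, Unitary.mem_iff.mpr ⟨hw₀1, hw₀2⟩, hconj⟩)
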